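/- Let 1 = G₀ ⊆ G₁ ⊆ ... ⊆ Gₙ = G be the upper central series of a group G, so that Gᵢ/G_{i-1} = Z(G/G_{i-1}) for each i. If G is R-torsion-free (i.e., for every prime p for which G has an element of order p, p·1_R is invertible in R), then each factor group Gᵢ/G_{i-1} is R-torsion-free. -/

import Mathlib

/-!
If `G` has no `p`-torsion, then `g ∈ Z_{i+1}` with `g ^ p ∈ Z_i` already lies in `Z_i`. By
induction on `i`: for every `y` the commutator `c = ⁅g, y⁆` lies in `Z_i`, and modulo `Z_{i-1}`
both `c` and `g ^ p` are central, so `c ^ p ≡ ⁅g ^ p, y⁆ ≡ 1`; the induction hypothesis applied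
to `c` gives `c ∈ Z_{i-1}`. Hence an element of order `p` in `Z_{i+1}/Z_i` would lift to a
`p`-torsion element of `G`.
-/

/-- `G` is `R`-torsion-free: for each prime `p` such that `G` has an element of order
`p`, the element `p • 1` is invertible in `R`. -/
def RTorsionFreeP (R : Type) (G : Type) [CommRing R] [Group G] : Prop :=
  ∀ p : ℕ, p.Prime → (∃ g : G, g ≠ 1 ∧ g ^ p = 1) → IsUnit ((p : R))

open scoped commutatorElement

section Commutator

variable {Q : Type*} [Group Q]

theorem commutatorElement_pow_left_of_commute {a b : Q} (h : Commute a ⁅a, b⁆) (n : ℕ) :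
    ⁅a ^ n, b⁆ = ⁅a, b⁆ ^ n := by
  induction n with
  | zero => simp
  | succ n ih =>
    rw [pow_succ', commutatorElement_mul_left_eq_conj_mul, ih, (h.pow_right n).eq,
      mul_inv_cancel_right, pow_succ]

theorem commutatorElement_pow_eq_one_of_commute {a b : Q} {n : ℕ}
    (hc : Commute a ⁅a, b⁆) (hn : Commute (a ^ n) b) : ⁅a, b⁆ ^ n = 1 := by
  rw [← commutatorElement_pow_left_of_commute hc, commutatorElement_eq_one_iff_commute]
  exact hn

end Commutator

namespace Subgroup

variable {G : Type*} [Group G]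

theorem mk_mem_center_of_mem_upperCentralSeries_succ {i : ℕ} {g : G}
    (hg : g ∈ upperCentralSeries G (i + 1)) :
    (g : G ⧸ upperCentralSeries G i) ∈ center (G ⧸ upperCentralSeries G i) :=
  (upperCentralSeriesStep_eq_comap_center _).le hg

theorem mem_upperCentralSeries_of_pow_mem {p : ℕ} (hG : ∀ h : G, h ^ p = 1 → h = 1) :
    ∀ (i : ℕ) {g : G}, g ∈ upperCentralSeries G (i + 1) →
      g ^ p ∈ upperCentralSeries G i → g ∈ upperCentralSeries G i := by
  intro i
  induction i with
  | zero =>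
    intro g _ hgp
    rw [upperCentralSeries_zero, mem_bot] at hgp ⊢
    exact hG g hgp
  | succ i ih =>
    intro g hg hgp
    rw [mem_upperCentralSeries_succ_iff]
    intro y
    have hc : ⁅g, y⁆ ∈ upperCentralSeries G (i + 1) := mem_upperCentralSeries_succ_iff.mp hg y
    refine ih hc ?_
    let π := QuotientGroup.mk' (upperCentralSeries G i)
    have hc_central : ⁅π g, π y⁆ ∈ center _ := by
      rw [← map_commutatorElement]
      exact mk_mem_center_of_mem_upperCentralSeries_succ hc
    have hgp_central : π g ^ p ∈ center _ := by
      rw [← map_pow]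
      exact mk_mem_center_of_mem_upperCentralSeries_succ hgp
    have hcp : π (⁅g, y⁆ ^ p) = 1 := by
      rw [map_pow, map_commutatorElement]
      exact commutatorElement_pow_eq_one_of_commute
        (mem_center_iff.mp hc_central (π g)) (mem_center_iff.mp hgp_central (π y)).symm
    rwa [QuotientGroup.mk'_apply, QuotientGroup.eq_one_iff] at hcp

end Subgroup

theorem upperCentralSeries_factor_torsionFree_general (R G : Type) [CommRing R] [Group G]
    (htf : RTorsionFreeP R G) :
    ∀ i : ℕ, RTorsionFreeP R
      (↥(Subgroup.upperCentralSeries G (i + 1)) ⧸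
        (Subgroup.upperCentralSeries G i).subgroupOf (Subgroup.upperCentralSeries G (i + 1))) := by
  intro i p hp ⟨x, hx, hxp⟩
  refine htf p hp ?_
  by_contra! hG
  obtain ⟨g, rfl⟩ := QuotientGroup.mk_surjective x
  rw [← QuotientGroup.mk_pow, QuotientGroup.eq_one_iff, Subgroup.mem_subgroupOf] at hxp
  refine hx ((QuotientGroup.eq_one_iff _).mpr (Subgroup.mem_subgroupOf.mpr ?_))
  exact Subgroup.mem_upperCentralSeries_of_pow_mem (fun h => not_imp_not.mp (hG h)) i g.2 hxp

/-- If `G` is `R`-torsion-free, then each factor `G_{i+1}/G_i` of the upper central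
series `1 = G_0 ⊆ G_1 ⊆ ... ⊆ G_n = G` of `G` is `R`-torsion-free. -/
theorem upperCentralSeries_factor_torsionFree (R G : Type) [CommRing R] [Group G]
    (n : ℕ) (htop : Subgroup.upperCentralSeries G n = ⊤) (htf : RTorsionFreeP R G) :
    ∀ i : ℕ, RTorsionFreeP R
      (↥(Subgroup.upperCentralSeries G (i + 1)) ⧸
        (Subgroup.upperCentralSeries G i).subgroupOf (Subgroup.upperCentralSeries G (i + 1))) :=
  upperCentralSeries_factor_torsionFree_general R G htf
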